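/- Let 𝔊 and 𝔊' be two confounder-free mDAGs on the same node set that are both consistent with the same fixed nodal ordering. Then 𝔊 observationally dominates 𝔊' if and only if 𝔊 structurally dominates 𝔊' (i.e., every directed edge of 𝔊' is a directed edge of 𝔊). -/

import Mathlib

open scoped Classical

/-! ## Basic structures: pDAGs and mDAGs -/

/-- A partitioned directed acyclic graph (pDAG) with visible node type `V` and
latent node type `L`.  Acyclicity is phrased via the existence of a topological
rank function, which for finite graphs is equivalent to the absence of directed
cycles. -/
structure pDAG (V L : Type) where
  edge : V ⊕ L → V ⊕ L → Prop
  acyclic : ∃ rank : V ⊕ L → ℕ, ∀ a b, edge a b → rank a < rank b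

/-- `P` is a probability distribution on a finite type. -/
def IsDist {α : Type} [Fintype α] (P : α → ℝ) : Prop :=
  (∀ x, 0 ≤ P x) ∧ ∑ x, P x = 1

/-- The joint assignment of outcomes to all (visible and latent) nodes obtained
from an assignment `xv` to the visible nodes and `xl` to the latent nodes. -/
def jointVal {V L : Type} (c : V → ℕ) (k : L → ℕ)
    (xv : (v : V) → Fin (c v)) (xl : (l : L) → Fin (k l)) :
    (a : V ⊕ L) → Fin (Sum.elim c k a)
  | Sum.inl v => xv v
  | Sum.inr l => xl l

/-- A probability distribution `P` over the visible variables (with cardinalities `c`)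
is realizable by the pDAG `G` (with classical unrestricted semantics, arbitrary finite
cardinalities of the latent variables) if there are latent cardinalities `k`, error
cardinalities `e`, error distributions `PE` and functions `f` (each depending only on
the values of the parents and the local error variable) whose induced marginal on the
visible variables is `P`. -/
def pDAG.Realizable {V L : Type} [Fintype V] [Fintype L] [DecidableEq V] [DecidableEq L]
    (G : pDAG V L) (c : V → ℕ) (P : ((v : V) → Fin (c v)) → ℝ) : Prop :=
  IsDist P ∧
  ∃ (k : L → ℕ) (e : V ⊕ L → ℕ)
    (PE : (a : V ⊕ L) → Fin (e a) → ℝ)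
    (f : (a : V ⊕ L) → ((b : V ⊕ L) → Fin (Sum.elim c k b)) → Fin (e a) →
      Fin (Sum.elim c k a)),
    (∀ a, IsDist (PE a)) ∧
    (∀ a g g' ε, (∀ b, G.edge b a → g b = g' b) → f a g ε = f a g' ε) ∧
    ∀ xv : (v : V) → Fin (c v),
      P xv = ∑ xl : (l : L) → Fin (k l), ∑ ε : (a : V ⊕ L) → Fin (e a),
        ∏ a : V ⊕ L,
          (if jointVal c k xv xl a = f a (jointVal c k xv xl) (ε a) then (1:ℝ) else 0)
            * PE a (ε a)

/-- `G` observationally dominates `G'`: for every assignment of finite cardinalities to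
the visible variables, every distribution realizable by `G'` is realizable by `G`. -/
def pDAG.ObsDominates {V L L' : Type} [Fintype V] [Fintype L] [Fintype L']
    [DecidableEq V] [DecidableEq L] [DecidableEq L']
    (G : pDAG V L) (G' : pDAG V L') : Prop :=
  ∀ (c : V → ℕ) (P : ((v : V) → Fin (c v)) → ℝ), G'.Realizable c P → G.Realizable c P

/-- An mDAG: a DAG on the node type `V` together with a simplicial complex on `V`
(a family of finite subsets containing all singletons and closed under subsets). -/
structure mDAG (V : Type) where
  edge : V → V → Prop
  acyclic : ∃ rank : V → ℕ, ∀ a b, edge a b → rank a < rank b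
  faces : Finset (Finset V)
  singleton_mem : ∀ v : V, {v} ∈ faces
  down_closed : ∀ A B : Finset V, A ⊆ B → B ∈ faces → A ∈ faces

namespace mDAG

variable {V : Type}

/-- A facet is an inclusion-maximal face of the simplicial complex. -/
def IsFacet (G : mDAG V) (A : Finset V) : Prop :=
  A ∈ G.faces ∧ ∀ B ∈ G.faces, A ⊆ B → A = B

/-- An mDAG is confounder-free if every facet of its simplicial complex is a singleton. -/
def ConfounderFree (G : mDAG V) : Prop :=
  ∀ A : Finset V, G.IsFacet A → ∃ v : V, A = {v}

/-- An mDAG is directed-edge-free if its directed structure has no edges. -/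
def DirectedEdgeFree (G : mDAG V) : Prop :=
  ∀ a b : V, ¬ G.edge a b

/-- `G` structurally dominates `G'` if the directed edges of `G'` are a subset of those
of `G` and the simplicial complex of `G'` is contained in that of `G`. -/
def StructDominates (G G' : mDAG V) : Prop :=
  (∀ a b : V, G'.edge a b → G.edge a b) ∧ G'.faces ⊆ G.faces

/-- The type of facets of an mDAG. -/
def Facets (G : mDAG V) : Type := {A : Finset V // G.IsFacet A}

noncomputable instance instFintypeFacets [Fintype V] [DecidableEq V] (G : mDAG V) :
    Fintype G.Facets := Subtype.fintype _

noncomputable instance instDecidableEqFacets (G : mDAG V) :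
    DecidableEq G.Facets := Classical.decEq _

/-- The canonical pDAG of an mDAG: the visible nodes carry the directed structure, and
there is one exogenous latent node per facet, whose children are exactly the members
of that facet. -/
def canon (G : mDAG V) : pDAG V G.Facets where
  edge a b :=
    match a, b with
    | Sum.inl u, Sum.inl v => G.edge u v
    | Sum.inr A, Sum.inl v => v ∈ A.1
    | _, Sum.inr _ => False
  acyclic := by
    obtain ⟨r, hr⟩ := G.acyclic
    refine ⟨Sum.elim (fun v => r v + 1) (fun _ => 0), ?_⟩
    rintro (u | A) (v | B) h
    · simpa using hr u v h
    · exact h.elim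
    · simp
    · exact h.elim

/-- Realizability of a distribution over the visible variables by an mDAG (via its
canonical pDAG). -/
def Realizable [Fintype V] [DecidableEq V] (G : mDAG V) (c : V → ℕ)
    (P : ((v : V) → Fin (c v)) → ℝ) : Prop :=
  G.canon.Realizable c P

/-- Observational dominance of mDAGs: for every assignment of finite cardinalities to
the visible nodes, every distribution realizable by `G'` is realizable by `G`. -/
def ObsDominates [Fintype V] [DecidableEq V] (G G' : mDAG V) : Prop :=
  ∀ (c : V → ℕ) (P : ((v : V) → Fin (c v)) → ℝ), G'.Realizable c P → G.Realizable c P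

/-- Observational equivalence of mDAGs. -/
def ObsEquiv [Fintype V] [DecidableEq V] (G G' : mDAG V) : Prop :=
  ∀ (c : V → ℕ) (P : ((v : V) → Fin (c v)) → ℝ), G.Realizable c P ↔ G'.Realizable c P

/-- Consistency with the fixed nodal ordering given by the order on `V`:
a later node is never an ancestor of an earlier node. -/
def OrderConsistent [LT V] (G : mDAG V) : Prop :=
  ∀ i j : V, i < j → ¬ Relation.TransGen G.edge j i

/-- `G'` is obtained from `G` by relabelling the nodes with the permutation `π`. -/
def IsRelabel (π : Equiv.Perm V) (G G' : mDAG V) : Prop :=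
  (∀ a b : V, G'.edge (π a) (π b) ↔ G.edge a b) ∧
  G'.faces = G.faces.image (Finset.image π)

/-- Adjacency in the skeleton of an mDAG: a directed edge in either direction, or
joint membership in some face of the simplicial complex. -/
def skelAdj (G : mDAG V) (u w : V) : Prop :=
  G.edge u w ∨ G.edge w u ∨ ∃ A ∈ G.faces, u ∈ A ∧ w ∈ A

end mDAG

/-! ## d-separation and e-separation -/

/-- Undirected adjacency underlying a directed graph. -/
def AdjRel {N : Type} (E : N → N → Prop) (a b : N) : Prop := E a b ∨ E b a

/-- The middle node `y` of a consecutive triple `(x, y, z)` of a path does not block the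
path given the conditioning set `C`: if `y` is a collider it has a descendant in `C`
(possibly itself), and if it is a non-collider it is not in `C`. -/
def ActiveTriple {N : Type} (E : N → N → Prop) (C : Set N) (x y z : N) : Prop :=
  ((E x y ∧ E z y) ∧ ∃ d ∈ C, Relation.ReflTransGen E y d) ∨
  (¬(E x y ∧ E z y) ∧ y ∉ C)

/-- Every consecutive triple of the path is active given the conditioning set `C`. -/
def TriplesActive {N : Type} (E : N → N → Prop) (C : Set N) : List N → Prop
  | x :: y :: z :: rest => ActiveTriple E C x y z ∧ TriplesActive E C (y :: z :: rest)
  | _ => True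

/-- `A` and `B` are d-connected given `C`: there is a (repetition-free, undirected)
path from a node of `A` to a node of `B` that is not blocked by `C`. -/
def DConnected {N : Type} (E : N → N → Prop) (A B C : Set N) : Prop :=
  ∃ p : List N, p.Chain' (AdjRel E) ∧ p.Nodup ∧
    (∃ a ∈ A, p.head? = some a) ∧ (∃ b ∈ B, p.getLast? = some b) ∧
    TriplesActive E C p

/-- d-separation: every undirected path from `A` to `B` is blocked by `C`. -/
def DSeparated {N : Type} (E : N → N → Prop) (A B C : Set N) : Prop :=
  ¬ DConnected E A B C

namespace mDAG

variable {V : Type}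

/-- d-separation of sets of (visible) nodes of an mDAG, evaluated in its canonical pDAG. -/
def dsep (G : mDAG V) (A B C : Set V) : Prop :=
  DSeparated G.canon.edge (Sum.inl '' A) (Sum.inl '' B) (Sum.inl '' C)

end mDAG

/-- The edge relation of a pDAG after deletion of the visible nodes in `D`. -/
def delEdge {V L : Type} (E : V ⊕ L → V ⊕ L → Prop) (D : Set V) (a b : V ⊕ L) : Prop :=
  E a b ∧ (∀ v, a = Sum.inl v → v ∉ D) ∧ (∀ v, b = Sum.inl v → v ∉ D)

namespace mDAG

variable {V : Type}

/-- e-separation: `A` and `B` are e-separated by `C` after deletion of `D` if they are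
d-separated by `C` in the subgraph of the canonical pDAG obtained by deleting the nodes
in `D`. -/
def eSep (G : mDAG V) (A B C D : Set V) : Prop :=
  DSeparated (delEdge G.canon.edge D) (Sum.inl '' A) (Sum.inl '' B) (Sum.inl '' C)

end mDAG

/-! ## Conditional independence -/

/-- The probability that the variables in `S` take the values specified by `g`. -/
noncomputable def margProb {V : Type} [Fintype V] [DecidableEq V] (c : V → ℕ)
    (P : ((v : V) → Fin (c v)) → ℝ) (S : Set V) (g : (v : V) → Fin (c v)) : ℝ :=
  ∑ x : (v : V) → Fin (c v), if ∀ v ∈ S, x v = g v then P x else 0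

/-- `X_A ⊥⊥ X_B | X_C` in the distribution `P`:
`P(X_A X_B | X_C) = P(X_A | X_C) P(X_B | X_C)` whenever the conditioning event has
positive probability. -/
def CondIndep {V : Type} [Fintype V] [DecidableEq V] (c : V → ℕ)
    (P : ((v : V) → Fin (c v)) → ℝ) (A B C : Set V) : Prop :=
  ∀ g : (v : V) → Fin (c v), 0 < margProb c P C g →
    margProb c P (A ∪ B ∪ C) g * margProb c P C g
      = margProb c P (A ∪ C) g * margProb c P (B ∪ C) g

/-! ## Districts, closures and densely connected pairs -/

namespace mDAG

variable {V : Type}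

/-- One step of connection through a common face, within the node subset `S`. -/
def faceStep (G : mDAG V) (S : Set V) (x y : V) : Prop :=
  x ∈ S ∧ y ∈ S ∧ ∃ F ∈ G.faces, x ∈ F ∧ y ∈ F

/-- The district of the set `A` in the sub-mDAG induced on `S`. -/
def disIn (G : mDAG V) (S A : Set V) : Set V :=
  {w | ∃ a ∈ A, Relation.ReflTransGen (G.faceStep S) a w}

/-- The ancestors of the set `A` (including `A` itself) in the directed structure
restricted to `S`. -/
def anIn (G : mDAG V) (S A : Set V) : Set V :=
  {w | ∃ a ∈ A, Relation.ReflTransGen (fun x y => x ∈ S ∧ y ∈ S ∧ G.edge x y) w a}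

/-- The alternating sequence of district and ancestor restrictions used to define
the closure of a set of nodes. -/
def closureSeq (G : mDAG V) (A : Set V) : ℕ → Set V
  | 0 => Set.univ
  | n + 1 =>
      if n % 2 = 0 then G.disIn (G.closureSeq A n) A else G.anIn (G.closureSeq A n) A

/-- The closure of a set of nodes: the limit (intersection) of the decreasing
alternating sequence. -/
def closure (G : mDAG V) (A : Set V) : Set V := ⋂ n, G.closureSeq A n

/-- `S` is bidirected-connected: it forms a single district of the induced sub-mDAG
on `S`. -/
def BidirConnected (G : mDAG V) (S : Set V) : Prop :=
  ∀ u ∈ S, ∀ w ∈ S, Relation.ReflTransGen (G.faceStep S) u w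

/-- Two distinct nodes `v`, `w` are densely connected. -/
def DenselyConnected (G : mDAG V) (v w : V) : Prop :=
  (∃ u ∈ G.closure {w}, G.edge v u) ∨
  (∃ u ∈ G.closure {v}, G.edge w u) ∨
  G.BidirConnected (G.closure {v, w})

/-- `S` is a realizable support of the mDAG `G` at cardinalities `c`: some distribution
realizable by `G` at `c` has support exactly `S`. -/
def RealizableSupport [Fintype V] [DecidableEq V] (G : mDAG V) (c : V → ℕ)
    (S : Set ((v : V) → Fin (c v))) : Prop :=
  ∃ P : ((v : V) → Fin (c v)) → ℝ, G.Realizable c P ∧ ∀ x, x ∈ S ↔ 0 < P x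

end mDAG
/-!
Two confounder-free mDAGs on the same nodes have the same simplicial complex (every face lies in
a singleton), so structural dominance is inclusion of directed edges, and extra edges only
enlarge the set of realizable distributions.

Conversely, let `a → b` be an edge of `𝔊'` missing from `𝔊`. Order consistency forbids `b → a`
in `𝔊`, so `a` and `b` are non-adjacent there. Give `a` and `b` two outcomes and every other node
one. In `𝔊'` the node `b` can copy a uniform `a`. In `𝔊` the nodes `a` and `b` depend only on
constant visible parents and on their private latents, so a positive-probability run producing
`(0, 0)` and one producing `(1, 1)` can be spliced at `a` and its latent into a run producing
`(1, 0)`. Thus the support of a distribution realizable by `𝔊` is a rectangle, which the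
support of the copy distribution is not.
-/

open Sum

theorem Fintype.prod_pos_iff_of_nonneg {ι : Type*} [Fintype ι] {t : ι → ℝ} (ht : ∀ i, 0 ≤ t i) :
    0 < ∏ i, t i ↔ ∀ i, 0 < t i :=
  ⟨fun h i => (ht i).lt_of_ne fun h0 => h.ne' (Finset.prod_eq_zero (Finset.mem_univ i) h0.symm),
    fun h => Finset.prod_pos fun i _ => h i⟩

theorem isDist_uniform {n : ℕ} (hn : 0 < n) : IsDist fun _ : Fin n => (n : ℝ)⁻¹ := by
  refine ⟨fun _ => by positivity, ?_⟩
  rw [Finset.sum_const, Finset.card_univ, Fintype.card_fin, nsmul_eq_mul]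
  exact mul_inv_cancel₀ (by positivity)

namespace mDAG

variable {V : Type}

theorem ext {G G' : mDAG V} (hedge : G.edge = G'.edge) (hfaces : G.faces = G'.faces) :
    G = G' := by
  cases G; cases G'
  cases hedge; cases hfaces
  rfl

theorem edge_irrefl (G : mDAG V) (v : V) : ¬ G.edge v v := by
  obtain ⟨r, hr⟩ := G.acyclic
  exact fun h => lt_irrefl _ (hr v v h)

theorem ne_of_edge (G : mDAG V) {u v : V} (h : G.edge u v) : u ≠ v :=
  fun huv => G.edge_irrefl u (huv ▸ h)

theorem exists_isFacet_superset (G : mDAG V) {A : Finset V} (hA : A ∈ G.faces) :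
    ∃ F, G.IsFacet F ∧ A ⊆ F := by
  obtain ⟨F, hAF, hF, hmax⟩ := G.faces.exists_le_maximal hA
  exact ⟨F, ⟨hF, fun B hB hFB => (hmax hB hFB).antisymm' hFB⟩, hAF⟩

namespace ConfounderFree

variable {G : mDAG V}

theorem mem_faces_iff (hG : G.ConfounderFree) {A : Finset V} :
    A ∈ G.faces ↔ ∃ v, A ⊆ {v} := by
  constructor
  · intro hA
    obtain ⟨F, hF, hAF⟩ := G.exists_isFacet_superset hA
    obtain ⟨v, rfl⟩ := hG F hF
    exact ⟨v, hAF⟩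
  · rintro ⟨v, hAv⟩
    exact G.down_closed A {v} hAv (G.singleton_mem v)

theorem faces_eq (hG : G.ConfounderFree) {G' : mDAG V} (hG' : G'.ConfounderFree) :
    G.faces = G'.faces := by
  ext A
  rw [hG.mem_faces_iff, hG'.mem_faces_iff]

theorem eq_singleton_of_mem (hG : G.ConfounderFree) {A : Finset V} (hA : G.IsFacet A) {v : V}
    (hv : v ∈ A) : A = {v} := by
  obtain ⟨w, rfl⟩ := hG A hA
  rw [Finset.mem_singleton.1 hv]

theorem isFacet_singleton (hG : G.ConfounderFree) (v : V) : G.IsFacet {v} := by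
  obtain ⟨F, hF, hvF⟩ := G.exists_isFacet_superset (G.singleton_mem v)
  rwa [← hG.eq_singleton_of_mem hF (hvF (Finset.mem_singleton_self v))]

def facet (hG : G.ConfounderFree) (v : V) : G.Facets := ⟨{v}, hG.isFacet_singleton v⟩

theorem eq_facet_of_mem (hG : G.ConfounderFree) (A : G.Facets) {v : V} (hv : v ∈ A.1) :
    A = hG.facet v :=
  Subtype.ext (hG.eq_singleton_of_mem A.2 hv)

theorem facet_injective (hG : G.ConfounderFree) : Function.Injective hG.facet :=
  fun _ _ h => Finset.singleton_injective congr($h.1)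

end ConfounderFree

end mDAG

theorem pDAG.Realizable.mono {V L : Type} [Fintype V] [Fintype L] [DecidableEq V] [DecidableEq L]
    {G G' : pDAG V L} (hedge : ∀ a b, G'.edge a b → G.edge a b) {c : V → ℕ}
    {P : ((v : V) → Fin (c v)) → ℝ} (h : G'.Realizable c P) : G.Realizable c P := by
  obtain ⟨hP, k, e, PE, f, hPE, hloc, hsum⟩ := h
  exact ⟨hP, k, e, PE, f, hPE, fun a g g' ε hg => hloc a g g' ε fun b hb => hg b (hedge b a hb),
    hsum⟩

theorem mDAG.Realizable.mono_of_faces_eq {V : Type} [Fintype V] [DecidableEq V] {G G' : mDAG V}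
    (hfaces : G'.faces = G.faces) (hedge : ∀ a b, G'.edge a b → G.edge a b) {c : V → ℕ}
    {P : ((v : V) → Fin (c v)) → ℝ} (h : G'.Realizable c P) : G.Realizable c P := by
  -- `G` with the faces of `G'` has literally the latent type `G'.Facets`.
  rw [← mDAG.ext (G := { G' with edge := G.edge, acyclic := G.acyclic }) (G' := G) rfl hfaces]
  refine pDAG.Realizable.mono (G' := G'.canon) ?_ h
  rintro (u | A) (v | B) huv
  exacts [hedge u v huv, huv, huv, huv]

section PositiveRun

variable {V L : Type} {c : V → ℕ} {k : L → ℕ} {e : V ⊕ L → ℕ}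

def IsPositiveRun (PE : (a : V ⊕ L) → Fin (e a) → ℝ)
    (f : (a : V ⊕ L) → ((b : V ⊕ L) → Fin (Sum.elim c k b)) → Fin (e a) → Fin (Sum.elim c k a))
    (xv : (v : V) → Fin (c v)) (xl : (l : L) → Fin (k l)) (ε : (a : V ⊕ L) → Fin (e a)) : Prop :=
  ∀ a, jointVal c k xv xl a = f a (jointVal c k xv xl) (ε a) ∧ 0 < PE a (ε a)

theorem IsPositiveRun.eq_apply_of_agree {E : V ⊕ L → V ⊕ L → Prop}
    {PE : (a : V ⊕ L) → Fin (e a) → ℝ}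
    {f : (a : V ⊕ L) → ((b : V ⊕ L) → Fin (Sum.elim c k b)) → Fin (e a) → Fin (Sum.elim c k a)}
    (hloc : ∀ a g g' ε, (∀ b, E b a → g b = g' b) → f a g ε = f a g' ε)
    {xv : (v : V) → Fin (c v)} {xl : (l : L) → Fin (k l)} {ε : (a : V ⊕ L) → Fin (e a)}
    (hrun : IsPositiveRun PE f xv xl ε) {J : (b : V ⊕ L) → Fin (Sum.elim c k b)} {n : V ⊕ L}
    (hn : J n = jointVal c k xv xl n) (hpar : ∀ m, E m n → J m = jointVal c k xv xl m) :
    J n = f n J (ε n) :=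
  calc J n = f n (jointVal c k xv xl) (ε n) := hn.trans (hrun n).1
    _ = f n J (ε n) := hloc n _ _ _ fun m hm => (hpar m hm).symm

variable [Fintype V] [Fintype L] [DecidableEq V] [DecidableEq L]

theorem realizationSum_pos_iff {PE : (a : V ⊕ L) → Fin (e a) → ℝ} (hPE : ∀ a x, 0 ≤ PE a x)
    (f : (a : V ⊕ L) → ((b : V ⊕ L) → Fin (Sum.elim c k b)) → Fin (e a) → Fin (Sum.elim c k a))
    (xv : (v : V) → Fin (c v)) :
    0 < ∑ xl : (l : L) → Fin (k l), ∑ ε : (a : V ⊕ L) → Fin (e a), ∏ a : V ⊕ L,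
        (if jointVal c k xv xl a = f a (jointVal c k xv xl) (ε a) then (1:ℝ) else 0) * PE a (ε a)
      ↔ ∃ xl ε, IsPositiveRun PE f xv xl ε := by
  have hfactor : ∀ (xl : (l : L) → Fin (k l)) (ε : (a : V ⊕ L) → Fin (e a)) a, 0 ≤
      (if jointVal c k xv xl a = f a (jointVal c k xv xl) (ε a) then (1:ℝ) else 0) * PE a (ε a) :=
    fun xl ε a => mul_nonneg (by split_ifs <;> norm_num) (hPE a _)
  have hprod : ∀ (xl : (l : L) → Fin (k l)) (ε : (a : V ⊕ L) → Fin (e a)), 0 ≤ ∏ a : V ⊕ L,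
      (if jointVal c k xv xl a = f a (jointVal c k xv xl) (ε a) then (1:ℝ) else 0) * PE a (ε a) :=
    fun xl ε => Finset.prod_nonneg fun a _ => hfactor xl ε a
  simp only [Finset.sum_pos_iff_of_nonneg fun xl _ => Finset.sum_nonneg fun ε _ => hprod xl ε,
    Finset.sum_pos_iff_of_nonneg fun ε _ => hprod _ ε, Finset.mem_univ, true_and]
  refine exists_congr fun xl => exists_congr fun ε => ?_
  rw [Fintype.prod_pos_iff_of_nonneg (hfactor xl ε)]
  refine forall_congr' fun a => ?_
  split_ifs with h <;> simp [h]

theorem realizationSum_inner_eq_prod_sum (PE : (a : V ⊕ L) → Fin (e a) → ℝ)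
    (f : (a : V ⊕ L) → ((b : V ⊕ L) → Fin (Sum.elim c k b)) → Fin (e a) → Fin (Sum.elim c k a))
    (J : (b : V ⊕ L) → Fin (Sum.elim c k b)) :
    ∑ ε : (a : V ⊕ L) → Fin (e a), ∏ a : V ⊕ L,
        (if J a = f a J (ε a) then (1:ℝ) else 0) * PE a (ε a)
      = ∏ a : V ⊕ L, ∑ εa : Fin (e a), (if J a = f a J εa then (1:ℝ) else 0) * PE a εa :=
  (Fintype.prod_sum fun a (εa : Fin (e a)) => (if J a = f a J εa then (1:ℝ) else 0) * PE a εa).symm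

end PositiveRun

namespace mDAG.ConfounderFree

variable {V : Type} [DecidableEq V] {G : mDAG V}

theorem isPositiveRun_splice (hG : G.ConfounderFree) {a b : V} (hnab : ¬ G.edge a b)
    (hnba : ¬ G.edge b a) {c : V → ℕ} (hc : ∀ v, v ≠ a → v ≠ b → c v ≤ 1) {k : G.Facets → ℕ}
    {e : V ⊕ G.Facets → ℕ} {PE : (n : V ⊕ G.Facets) → Fin (e n) → ℝ}
    {f : (n : V ⊕ G.Facets) → ((m : V ⊕ G.Facets) → Fin (Sum.elim c k m)) → Fin (e n) →
      Fin (Sum.elim c k n)}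
    (hloc : ∀ n g g' ε, (∀ m, G.canon.edge m n → g m = g' m) → f n g ε = f n g' ε)
    {x x' : (v : V) → Fin (c v)} {xl xl' : (l : G.Facets) → Fin (k l)}
    {ε ε' : (n : V ⊕ G.Facets) → Fin (e n)}
    (hrun : IsPositiveRun PE f x xl ε) (hrun' : IsPositiveRun PE f x' xl' ε') :
    IsPositiveRun PE f (Function.update x a (x' a))
      (Function.update xl (hG.facet a) (xl' (hG.facet a)))
      (fun n => if n = inl a ∨ n = inr (hG.facet a) then ε' n else ε n) := by
  have trivial_eq : ∀ u, u ≠ a → u ≠ b → ∀ y z : Fin (c u), y = z :=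
    fun u hua hub => (Fin.subsingleton_iff_le_one.2 (hc u hua hub)).elim
  rintro (v | A) <;> beta_reduce
  · by_cases hva : v = a
    · subst v
      rw [if_pos (Or.inl rfl)]
      refine ⟨hrun'.eq_apply_of_agree hloc (by simp [jointVal]) ?_, (hrun' _).2⟩
      rintro (u | B) hu
      · exact trivial_eq u (fun h => G.edge_irrefl a (h ▸ hu)) (fun h => hnba (h ▸ hu)) _ _
      · obtain rfl := hG.eq_facet_of_mem B hu
        simp [jointVal]
    rw [if_neg (by simp [hva])]
    refine ⟨?_, (hrun _).2⟩
    by_cases hvb : v = b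
    · subst v
      refine hrun.eq_apply_of_agree hloc (by simp [jointVal, hva]) ?_
      rintro (u | B) hu
      · exact trivial_eq u (fun h => hnab (h ▸ hu)) (fun h => G.edge_irrefl b (h ▸ hu)) _ _
      · obtain rfl := hG.eq_facet_of_mem B hu
        simp [jointVal, Function.update_of_ne (hG.facet_injective.ne hva)]
    · exact trivial_eq v hva hvb _ _
  · by_cases hA : A = hG.facet a
    · subst A
      rw [if_pos (Or.inr rfl)]
      refine ⟨hrun'.eq_apply_of_agree hloc (by simp [jointVal]) ?_, (hrun' _).2⟩
      rintro (u | B) hu <;> exact hu.elim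
    · rw [if_neg (by simp [hA])]
      refine ⟨hrun.eq_apply_of_agree hloc (by simp [jointVal, hA]) ?_, (hrun _).2⟩
      rintro (u | B) hu <;> exact hu.elim

theorem realizable_pos_update [Fintype V] (hG : G.ConfounderFree) {a b : V} (hnab : ¬ G.edge a b)
    (hnba : ¬ G.edge b a) {c : V → ℕ} (hc : ∀ v, v ≠ a → v ≠ b → c v ≤ 1)
    {P : ((v : V) → Fin (c v)) → ℝ} (hP : G.Realizable c P) {x x' : (v : V) → Fin (c v)}
    (hx : 0 < P x) (hx' : 0 < P x') : 0 < P (Function.update x a (x' a)) := by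
  obtain ⟨-, k, e, PE, f, hPE, hloc, hsum⟩ := hP
  rw [hsum, realizationSum_pos_iff fun n => (hPE n).1] at hx hx' ⊢
  obtain ⟨xl, ε, hrun⟩ := hx
  obtain ⟨xl', ε', hrun'⟩ := hx'
  exact ⟨_, _, hG.isPositiveRun_splice hnab hnba hc hloc hrun hrun'⟩

end mDAG.ConfounderFree

section CopyDistribution

variable {V : Type} [DecidableEq V] (a b : V)

def pairCard (v : V) : ℕ := if v = a ∨ v = b then 2 else 1

theorem pairCard_pos (v : V) : 0 < pairCard a b v := by
  unfold pairCard; split_ifs <;> omega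

variable {a b} in
theorem pairCard_le_one {v : V} (hva : v ≠ a) (hvb : v ≠ b) : pairCard a b v ≤ 1 := by
  simp [pairCard, hva, hvb]

def diagAssign (i : ℕ) (v : V) : Fin (pairCard a b v) :=
  ⟨i % pairCard a b v, Nat.mod_lt _ (pairCard_pos a b v)⟩

noncomputable def copyDist (x : (v : V) → Fin (pairCard a b v)) : ℝ :=
  if (x a : ℕ) = x b then 2⁻¹ else 0

theorem copyDist_diagAssign (i : ℕ) : copyDist a b (diagAssign a b i) = 2⁻¹ := by
  simp [copyDist, diagAssign, pairCard]

variable {a b} in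
theorem copyDist_update_diagAssign (hab : a ≠ b) :
    copyDist a b (Function.update (diagAssign a b 0) a (diagAssign a b 1 a)) = 0 := by
  rw [copyDist, Function.update_self, Function.update_of_ne (Ne.symm hab)]
  simp [diagAssign, pairCard]

theorem eq_diagAssign_of_copy {x : (v : V) → Fin (pairCard a b v)} (hx : (x a : ℕ) = x b) :
    x = diagAssign a b (x a) := by
  have hxa : (x a : ℕ) < 2 := by simpa [pairCard] using (x a).isLt
  funext v
  apply Fin.ext
  by_cases hva : v = a
  · subst v; simp [diagAssign, pairCard, Nat.mod_eq_of_lt hxa]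
  by_cases hvb : v = b
  · subst v
    simp only [diagAssign, pairCard, or_true, if_true, ← hx, Nat.mod_eq_of_lt hxa]
  · have hv := (x v).isLt
    simp only [pairCard, hva, hvb, or_self, if_false] at hv
    simp [diagAssign, pairCard, hva, hvb, Nat.lt_one_iff.1 hv, Nat.mod_one]

theorem copyDist_isDist [Fintype V] : IsDist (copyDist a b) := by
  refine ⟨fun x => by unfold copyDist; split_ifs <;> norm_num, ?_⟩
  have hsupp : Finset.univ.filter (fun x : (v : V) → Fin (pairCard a b v) => (x a : ℕ) = x b)
      = {diagAssign a b 0, diagAssign a b 1} := by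
    ext x
    simp only [Finset.mem_filter, Finset.mem_univ, true_and, Finset.mem_insert,
      Finset.mem_singleton]
    constructor
    · intro hx
      have hxa : (x a : ℕ) < 2 := by simpa [pairCard] using (x a).isLt
      rw [eq_diagAssign_of_copy a b hx]
      interval_cases (x a : ℕ) <;> simp
    · rintro (rfl | rfl) <;> simp [diagAssign, pairCard]
  have hne : diagAssign a b 0 ≠ diagAssign a b 1 := fun h => by
    simpa [diagAssign, pairCard] using congr($h a)
  simp only [copyDist]
  rw [← Finset.sum_filter, hsupp, Finset.sum_pair hne]
  norm_num

variable {L : Type}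

abbrev copyCard : V ⊕ L → ℕ := Sum.elim (pairCard a b) fun _ => 1

def copyMechanism : (n : V ⊕ L) → ((m : V ⊕ L) → Fin (copyCard a b m)) →
    Fin (copyCard a b n) → Fin (copyCard a b n)
  | inl v, g, ε =>
      if h : v = b then ⟨g (inl a), by subst h; simpa [pairCard] using (g (inl a)).isLt⟩ else ε
  | inr _, _, ε => ε

theorem sum_copyMechanism (g : (m : V ⊕ L) → Fin (copyCard a b m)) (n : V ⊕ L) :
    ∑ ε : Fin (copyCard a b n),
        (if g n = copyMechanism a b n g ε then (1:ℝ) else 0) * (copyCard a b n : ℝ)⁻¹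
      = if n = inl b then (if (g (inl a) : ℕ) = g (inl b) then 1 else 0)
        else (copyCard a b n : ℝ)⁻¹ := by
  by_cases hnb : n = inl b
  · subst n
    have hcond : ∀ ε, g (inl b) = copyMechanism a b (inl b) g ε ↔ (g (inl a) : ℕ) = g (inl b) :=
      fun ε => by rw [copyMechanism, dif_pos rfl, Fin.ext_iff, eq_comm]
    simp only [hcond, if_true, Finset.sum_const, Finset.card_univ, Fintype.card_fin, nsmul_eq_mul]
    split_ifs <;> simp [pairCard]
  · have hid : ∀ ε, copyMechanism a b n g ε = ε := by
      rcases n with v | A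
      · simp [copyMechanism, show v ≠ b by rintro rfl; exact hnb rfl]
      · simp [copyMechanism]
    simp [hid, hnb]

variable [Fintype V] {a b}

theorem prod_pairCard_inv_erase (hab : a ≠ b) :
    ∏ v ∈ Finset.univ.erase b, (pairCard a b v : ℝ)⁻¹ = 2⁻¹ := by
  rw [Finset.prod_congr rfl fun v hv => show (pairCard a b v : ℝ)⁻¹ = if v = a then 2⁻¹ else 1 by
    by_cases hva : v = a <;> simp [pairCard, hva, (Finset.mem_erase.1 hv).1]]
  simp [Finset.prod_ite_eq', hab]

theorem copyDist_realizable_of_edge (G' : mDAG V) (hedge : G'.edge a b) :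
    G'.Realizable (pairCard a b) (copyDist a b) := by
  have hab := G'.ne_of_edge hedge
  refine ⟨copyDist_isDist a b, fun _ => 1, copyCard a b, fun n _ => (copyCard a b n : ℝ)⁻¹,
    copyMechanism a b, fun n => isDist_uniform ?_, ?_, fun x => ?_⟩
  · rcases n with v | A
    exacts [pairCard_pos a b v, one_pos]
  · rintro (v | A) g g' ε hg
    · by_cases hvb : v = b
      · subst v
        simp only [copyMechanism, hg (inl a) hedge]
      · simp only [copyMechanism, dif_neg hvb]
    · rfl
  · rw [Fintype.sum_unique, realizationSum_inner_eq_prod_sum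
      (fun n (_ : Fin (copyCard a b n)) => (copyCard a b n : ℝ)⁻¹) (copyMechanism a b),
      Fintype.prod_sum_type]
    simp only [sum_copyMechanism]
    simp only [inl.injEq, reduceCtorEq, if_false, copyCard, Sum.elim_inr,
      Nat.cast_one, inv_one, Finset.prod_const_one, mul_one, Sum.elim_inl]
    rw [← Finset.mul_prod_erase _ _ (Finset.mem_univ b), if_pos rfl,
      Finset.prod_congr rfl fun v hv => if_neg (Finset.ne_of_mem_erase hv),
      prod_pairCard_inv_erase hab, ite_mul, one_mul, zero_mul]
    rfl

theorem mDAG.ConfounderFree.not_realizable_copyDist {G : mDAG V} (hG : G.ConfounderFree)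
    (hab : a ≠ b) (hnab : ¬ G.edge a b) (hnba : ¬ G.edge b a) :
    ¬ G.Realizable (pairCard a b) (copyDist a b) := fun hP => by
  have hpos : ∀ i, 0 < copyDist a b (diagAssign a b i) := fun i => by
    rw [copyDist_diagAssign]; norm_num
  have := hG.realizable_pos_update hnab hnba (fun v => pairCard_le_one) hP (hpos 0) (hpos 1)
  rw [copyDist_update_diagAssign hab] at this
  exact lt_irrefl 0 this

end CopyDistribution

/-- For two confounder-free mDAGs on the same node set, both consistent
with the same fixed nodal ordering (given by the linear order on `V`), observational
dominance holds if and only if structural dominance holds. -/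
theorem confounder_free_obs_dominance_iff_struct_dominance
    {V : Type} [Fintype V] [LinearOrder V]
    (G G' : mDAG V) (hG : G.ConfounderFree) (hG' : G'.ConfounderFree)
    (hOG : G.OrderConsistent) (hOG' : G'.OrderConsistent) :
    G.ObsDominates G' ↔ G.StructDominates G' := by
  have hfaces : G'.faces = G.faces := hG'.faces_eq hG
  refine ⟨fun hObs => ⟨fun a b hedge => ?_, hfaces.subset⟩,
    fun hStruct _ _ => mDAG.Realizable.mono_of_faces_eq hfaces hStruct.1⟩
  by_contra hnab
  have hab := G'.ne_of_edge hedge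
  have hlt : a < b := hab.lt_or_gt.resolve_right fun hba => hOG' b a hba (.single hedge)
  exact hG.not_realizable_copyDist hab hnab (fun hba => hOG a b hlt (.single hba))
    (hObs _ _ (copyDist_realizable_of_edge G' hedge))
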